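/- arXiv:2312.11800 — 3 statements merged into one kernel-verified Lean document; each statement's English description precedes it below -/
import Mathlib

section
/- Let X₁,...,Xₙ be i.i.d. in [0,1] with mean μ_v, Y₁,...,Yₙ i.i.d. in [0,1] with mean μ_c, all independent, with μ_v > μ_c and μ_c > 0, and δ = (μ_v−μ_c)/2. Then FB := E[(∑Xᵢ − ∑Yⱼ)·1{∑Xᵢ ≥ ∑Yⱼ}] ≤ n·(μ_v − μ_c + exp(−nδ²/(3μ_v)) + exp(−nδ²/(3μ_c))). Since the always-trade mechanism achieves GFT exactly n(μ_v − μ_c), its GFT is at least (1 − e^{−Ω(n)})·FB. -/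
/-!
Write `Z = ∑ Xᵢ - ∑ Yⱼ`, so that the first best is `E[max Z 0]`. Since `-n ≤ Z`, we have
`Z ≤ max Z 0 ≤ Z + n·1{Z ≤ 0}`, hence `n(μv - μc) ≤ FB ≤ n(μv - μc) + n·P(Z ≤ 0)`.
Convexity of `exp` gives `E[e^{tX}] ≤ exp(E[X](e^t - 1))` for `X ∈ [0,1]`; the Chernoff bound
with the tilt `e^t = √(μc/μv)` then yields `P(Z ≤ 0) ≤ exp(-n(√μv - √μc)²)`, and
`(√μv - √μc)² ≥ (μv - μc)²/(4μv) ≥ δ²/(3μv)`. The lower bound `FB ≥ n(μv - μc)` turns the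
additive error `n·e^{-cn}` into the factor `1 - e^{-cn}/(μv - μc)`.
-/

open MeasureTheory ProbabilityTheory Filter Finset Real

lemma sq_sub_div_le_sq_sqrt_sub_sqrt {a b : ℝ} (hb : 0 ≤ b) (hba : b ≤ a) :
    (a - b) ^ 2 / (4 * a) ≤ (√a - √b) ^ 2 := by
  obtain ⟨x, hx, rfl⟩ : ∃ x, 0 ≤ x ∧ x ^ 2 = a := ⟨√a, sqrt_nonneg _, sq_sqrt (hb.trans hba)⟩
  obtain ⟨y, hy, rfl⟩ : ∃ y, 0 ≤ y ∧ y ^ 2 = b := ⟨√b, sqrt_nonneg _, sq_sqrt hb⟩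
  rw [sqrt_sq hx, sqrt_sq hy]
  have hyx : y ≤ x := (pow_le_pow_iff_left₀ hy hx two_ne_zero).1 hba
  have hsum : (x + y) ^ 2 ≤ 4 * x ^ 2 := by nlinarith
  refine div_le_of_le_mul₀ (by positivity) (sq_nonneg _) ?_
  nlinarith [mul_le_mul_of_nonneg_left hsum (sq_nonneg (x - y))]

lemma sub_mul_ite_le_eq_max (a b : ℝ) : (a - b) * (if b ≤ a then 1 else 0) = max (a - b) 0 := by
  split_ifs with h
  · simp [h]
  · simp [(not_le.1 h).le]

section

variable {Ω : Type*} [MeasurableSpace Ω] {μ : Measure Ω}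

lemma integral_max_zero_le [IsFiniteMeasure μ] {Z : Ω → ℝ} (hZ : Integrable Z μ) {C : ℝ}
    (hC : ∀ᵐ ω ∂μ, -C ≤ Z ω) :
    ∫ ω, max (Z ω) 0 ∂μ ≤ μ[Z] + C * μ.real {ω | Z ω ≤ 0} := by
  have hs : NullMeasurableSet {ω | Z ω ≤ 0} μ :=
    nullMeasurableSet_le hZ.aemeasurable aemeasurable_const
  have hind : Integrable ({ω | Z ω ≤ 0}.indicator fun _ ↦ C) μ :=
    (integrable_const C).indicator₀ hs
  calc ∫ ω, max (Z ω) 0 ∂μ ≤ ∫ ω, Z ω + {ω | Z ω ≤ 0}.indicator (fun _ ↦ C) ω ∂μ := by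
        refine integral_mono_ae hZ.pos_part (hZ.add hind) ?_
        filter_upwards [hC] with ω hω
        by_cases h : Z ω ≤ 0
        · simp only [h, sup_of_le_right, Set.mem_ofPred_eq, Set.indicator_of_mem]
          linarith
        · simp [Set.indicator_of_notMem (show ω ∉ {ω | Z ω ≤ 0} from h), (not_le.1 h).le]
    _ = μ[Z] + C * μ.real {ω | Z ω ≤ 0} := by
        rw [integral_add hZ hind, integral_indicator₀ hs, setIntegral_const, smul_eq_mul, mul_comm]

lemma ae_sum_mem_Icc_zero_card {ι : Type*} {X : ι → Ω → ℝ}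
    (hX01 : ∀ i, ∀ᵐ ω ∂μ, X i ω ∈ Set.Icc (0 : ℝ) 1) (s : Finset ι) :
    ∀ᵐ ω ∂μ, ∑ i ∈ s, X i ω ∈ Set.Icc (0 : ℝ) #s := by
  filter_upwards [(eventually_all_finset s).2 fun i _ ↦ hX01 i] with ω hω
  refine ⟨sum_nonneg fun i hi ↦ (hω i hi).1, ?_⟩
  simpa using sum_le_sum fun i hi ↦ (hω i hi).2

lemma mgf_le_exp_integral_mul_exp_sub_one [IsProbabilityMeasure μ] {X : Ω → ℝ}
    (hX : AEMeasurable X μ) (hX01 : ∀ᵐ ω ∂μ, X ω ∈ Set.Icc (0 : ℝ) 1) (t : ℝ) :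
    mgf X μ t ≤ exp (μ[X] * (exp t - 1)) := by
  have hint : Integrable X μ := .of_mem_Icc 0 1 hX hX01
  have hchord : ∀ᵐ ω ∂μ, exp (t * X ω) ≤ 1 + X ω * (exp t - 1) := by
    filter_upwards [hX01] with ω ⟨h0, h1⟩
    have := convexOn_exp.2 (Set.mem_univ 0) (Set.mem_univ t) (sub_nonneg.2 h1) h0 (by ring)
    simp only [smul_eq_mul, mul_zero, zero_add, exp_zero, mul_one] at this
    rw [mul_comm]
    linarith
  calc mgf X μ t ≤ ∫ ω, 1 + X ω * (exp t - 1) ∂μ :=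
        integral_mono_ae (integrable_exp_mul_of_mem_Icc hX hX01)
          ((integrable_const 1).add (hint.mul_const _)) hchord
    _ = 1 + μ[X] * (exp t - 1) := by
        rw [integral_add (integrable_const 1) (hint.mul_const _), integral_mul_const]
        simp
    _ ≤ exp (μ[X] * (exp t - 1)) := by linarith [add_one_le_exp (μ[X] * (exp t - 1))]

variable {ι : Type*} {X Y : ι → Ω → ℝ}

lemma mgf_sum_sub_sum_le [IsProbabilityMeasure μ] (hX : ∀ i, Measurable (X i))
    (hY : ∀ j, Measurable (Y j)) (hindep : iIndepFun (Sum.elim X Y) μ)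
    (hX01 : ∀ i, ∀ᵐ ω ∂μ, X i ω ∈ Set.Icc (0 : ℝ) 1)
    (hY01 : ∀ j, ∀ᵐ ω ∂μ, Y j ω ∈ Set.Icc (0 : ℝ) 1)
    {mX mY : ℝ} (hmX : ∀ i, μ[X i] = mX) (hmY : ∀ j, μ[Y j] = mY) (s : Finset ι) (t : ℝ) :
    mgf (fun ω ↦ ∑ i ∈ s, X i ω - ∑ j ∈ s, Y j ω) μ t
      ≤ exp (#s * (mX * (exp t - 1) + mY * (exp (-t) - 1))) := by
  set W : ι ⊕ ι → Ω → ℝ := Sum.elim X fun j ↦ -Y j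
  have hW : iIndepFun W μ := by
    convert hindep.comp (Sum.elim (fun _ ↦ id) fun _ ↦ Neg.neg)
      (by rintro (i | j); exacts [measurable_id, measurable_neg]) using 1
    funext k; cases k <;> rfl
  have hWm : ∀ k, Measurable (W k) := by rintro (i | j); exacts [hX i, (hY j).neg]
  have hsum : (fun ω ↦ ∑ i ∈ s, X i ω - ∑ j ∈ s, Y j ω) = ∑ k ∈ s.disjSum s, W k := by
    funext ω
    simp [W, sum_disjSum, sub_eq_add_neg]
  rw [hsum, hW.mgf_sum hWm, prod_disjSum]
  calc (∏ i ∈ s, mgf (W (.inl i)) μ t) * ∏ j ∈ s, mgf (W (.inr j)) μ t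
      ≤ (∏ _i ∈ s, exp (mX * (exp t - 1))) * ∏ _j ∈ s, exp (mY * (exp (-t) - 1)) := by
        gcongr with i _ j _
        · exact prod_nonneg fun _ _ ↦ mgf_nonneg
        · exact fun _ _ ↦ mgf_nonneg
        · simpa [W, hmX i] using mgf_le_exp_integral_mul_exp_sub_one (hX i).aemeasurable (hX01 i) t
        · exact fun _ _ ↦ mgf_nonneg
        · simpa [W, mgf_neg, hmY j] using
            mgf_le_exp_integral_mul_exp_sub_one (hY j).aemeasurable (hY01 j) (-t)
    _ = exp (#s * (mX * (exp t - 1) + mY * (exp (-t) - 1))) := by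
        rw [prod_const, prod_const, ← exp_nat_mul, ← exp_nat_mul, ← exp_add, mul_add]

lemma ae_sum_sub_sum_mem_Icc (hX01 : ∀ i, ∀ᵐ ω ∂μ, X i ω ∈ Set.Icc (0 : ℝ) 1)
    (hY01 : ∀ j, ∀ᵐ ω ∂μ, Y j ω ∈ Set.Icc (0 : ℝ) 1) (s : Finset ι) :
    ∀ᵐ ω ∂μ, ∑ i ∈ s, X i ω - ∑ j ∈ s, Y j ω ∈ Set.Icc (-(#s : ℝ)) #s := by
  filter_upwards [ae_sum_mem_Icc_zero_card hX01 s, ae_sum_mem_Icc_zero_card hY01 s] with ω hx hy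
  exact ⟨by linarith [hx.1, hy.2], by linarith [hx.2, hy.1]⟩

lemma measureReal_sum_sub_sum_nonpos_le [IsProbabilityMeasure μ] (hX : ∀ i, Measurable (X i))
    (hY : ∀ j, Measurable (Y j)) (hindep : iIndepFun (Sum.elim X Y) μ)
    (hX01 : ∀ i, ∀ᵐ ω ∂μ, X i ω ∈ Set.Icc (0 : ℝ) 1)
    (hY01 : ∀ j, ∀ᵐ ω ∂μ, Y j ω ∈ Set.Icc (0 : ℝ) 1)
    {mX mY : ℝ} (hmX : ∀ i, μ[X i] = mX) (hmY : ∀ j, μ[Y j] = mY) (hpos : 0 < mY)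
    (hle : mY ≤ mX) (s : Finset ι) :
    μ.real {ω | ∑ i ∈ s, X i ω - ∑ j ∈ s, Y j ω ≤ 0} ≤ exp (-(#s * (√mX - √mY) ^ 2)) := by
  set a := √mX
  set b := √mY
  have ha : 0 < a := sqrt_pos.2 (hpos.trans_le hle)
  have hb : 0 < b := sqrt_pos.2 hpos
  have ha2 : a ^ 2 = mX := sq_sqrt (hpos.trans_le hle).le
  have hb2 : b ^ 2 = mY := sq_sqrt hpos.le
  set t := log (b / a)
  have ht : t ≤ 0 := log_nonpos (by positivity) ((div_le_one ha).2 (sqrt_le_sqrt hle))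
  have het : exp t = b / a := exp_log (by positivity)
  have hent : exp (-t) = a / b := by rw [exp_neg, het, inv_div]
  have hexp : mX * (exp t - 1) + mY * (exp (-t) - 1) = -(a - b) ^ 2 := by
    rw [het, hent, ← ha2, ← hb2]
    field_simp
    ring
  have hZm : AEMeasurable (fun ω ↦ ∑ i ∈ s, X i ω - ∑ j ∈ s, Y j ω) μ :=
    ((measurable_sum s fun i _ ↦ hX i).sub (measurable_sum s fun j _ ↦ hY j)).aemeasurable
  calc μ.real {ω | ∑ i ∈ s, X i ω - ∑ j ∈ s, Y j ω ≤ 0}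
      ≤ exp (-t * 0) * mgf (fun ω ↦ ∑ i ∈ s, X i ω - ∑ j ∈ s, Y j ω) μ t :=
        measure_le_le_exp_mul_mgf 0 ht
          (integrable_exp_mul_of_mem_Icc hZm (ae_sum_sub_sum_mem_Icc hX01 hY01 s))
    _ ≤ exp (#s * (mX * (exp t - 1) + mY * (exp (-t) - 1))) := by
        simpa using mgf_sum_sub_sum_le hX hY hindep hX01 hY01 hmX hmY s t
    _ = exp (-(#s * (a - b) ^ 2)) := by rw [hexp, mul_neg]

lemma integrable_sum_sub_sum [IsFiniteMeasure μ] (hX : ∀ i, Measurable (X i))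
    (hY : ∀ j, Measurable (Y j)) (hX01 : ∀ i, ∀ᵐ ω ∂μ, X i ω ∈ Set.Icc (0 : ℝ) 1)
    (hY01 : ∀ j, ∀ᵐ ω ∂μ, Y j ω ∈ Set.Icc (0 : ℝ) 1) (s : Finset ι) :
    Integrable (fun ω ↦ ∑ i ∈ s, X i ω - ∑ j ∈ s, Y j ω) μ :=
  .of_mem_Icc _ _
    ((measurable_sum s fun i _ ↦ hX i).sub (measurable_sum s fun j _ ↦ hY j)).aemeasurable
    (ae_sum_sub_sum_mem_Icc hX01 hY01 s)

lemma integral_sum_sub_sum [IsFiniteMeasure μ] (hX : ∀ i, Measurable (X i))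
    (hY : ∀ j, Measurable (Y j)) (hX01 : ∀ i, ∀ᵐ ω ∂μ, X i ω ∈ Set.Icc (0 : ℝ) 1)
    (hY01 : ∀ j, ∀ᵐ ω ∂μ, Y j ω ∈ Set.Icc (0 : ℝ) 1)
    {mX mY : ℝ} (hmX : ∀ i, μ[X i] = mX) (hmY : ∀ j, μ[Y j] = mY) (s : Finset ι) :
    ∫ ω, ∑ i ∈ s, X i ω - ∑ j ∈ s, Y j ω ∂μ = #s * (mX - mY) := by
  have hXi i : Integrable (X i) μ := .of_mem_Icc 0 1 (hX i).aemeasurable (hX01 i)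
  have hYj j : Integrable (Y j) μ := .of_mem_Icc 0 1 (hY j).aemeasurable (hY01 j)
  rw [integral_sub (integrable_finsetSum s fun i _ ↦ hXi i)
      (integrable_finsetSum s fun j _ ↦ hYj j),
    integral_finsetSum s fun i _ ↦ hXi i, integral_finsetSum s fun j _ ↦ hYj j]
  simp [hmX, hmY, mul_sub]

lemma le_integral_max_sum_sub_sum [IsFiniteMeasure μ] (hX : ∀ i, Measurable (X i))
    (hY : ∀ j, Measurable (Y j)) (hX01 : ∀ i, ∀ᵐ ω ∂μ, X i ω ∈ Set.Icc (0 : ℝ) 1)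
    (hY01 : ∀ j, ∀ᵐ ω ∂μ, Y j ω ∈ Set.Icc (0 : ℝ) 1)
    {mX mY : ℝ} (hmX : ∀ i, μ[X i] = mX) (hmY : ∀ j, μ[Y j] = mY) (s : Finset ι) :
    #s * (mX - mY) ≤ ∫ ω, max (∑ i ∈ s, X i ω - ∑ j ∈ s, Y j ω) 0 ∂μ := by
  have hZ := integrable_sum_sub_sum (μ := μ) hX hY hX01 hY01 s
  rw [← integral_sum_sub_sum hX hY hX01 hY01 hmX hmY]
  exact integral_mono hZ hZ.pos_part fun ω ↦ le_max_left _ _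

lemma integral_max_sum_sub_sum_le [IsProbabilityMeasure μ] (hX : ∀ i, Measurable (X i))
    (hY : ∀ j, Measurable (Y j)) (hindep : iIndepFun (Sum.elim X Y) μ)
    (hX01 : ∀ i, ∀ᵐ ω ∂μ, X i ω ∈ Set.Icc (0 : ℝ) 1)
    (hY01 : ∀ j, ∀ᵐ ω ∂μ, Y j ω ∈ Set.Icc (0 : ℝ) 1)
    {mX mY : ℝ} (hmX : ∀ i, μ[X i] = mX) (hmY : ∀ j, μ[Y j] = mY) (hpos : 0 < mY)
    (hle : mY ≤ mX) (s : Finset ι) :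
    ∫ ω, max (∑ i ∈ s, X i ω - ∑ j ∈ s, Y j ω) 0 ∂μ
      ≤ #s * (mX - mY) + #s * exp (-(#s * (√mX - √mY) ^ 2)) := by
  have hsplit := integral_max_zero_le (integrable_sum_sub_sum hX hY hX01 hY01 s)
    ((ae_sum_sub_sum_mem_Icc hX01 hY01 s).mono fun ω h ↦ h.1)
  rw [integral_sum_sub_sum hX hY hX01 hY01 hmX hmY] at hsplit
  grw [hsplit, measureReal_sum_sub_sum_nonpos_le hX hY hindep hX01 hY01 hmX hmY hpos hle s]

end

theorem stmt_8_general {Ω : Type*} [MeasureSpace Ω] [IsProbabilityMeasure (ℙ : Measure Ω)]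
    (X Y : ℕ → Ω → ℝ) (hX : ∀ i, Measurable (X i)) (hY : ∀ j, Measurable (Y j))
    (hindep : iIndepFun (Sum.elim X Y) ℙ)
    (hXrange : ∀ i, ∀ᵐ ω ∂ℙ, X i ω ∈ Set.Icc (0:ℝ) 1)
    (hYrange : ∀ j, ∀ᵐ ω ∂ℙ, Y j ω ∈ Set.Icc (0:ℝ) 1)
    (μv μc δ : ℝ) (hμv : ∀ i, (∫ ω, X i ω) = μv) (hμc : ∀ j, (∫ ω, Y j ω) = μc)
    (hlt : μc < μv) (hpos : 0 < μc) (hδ : δ = (μv - μc) / 2) :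
    (∀ n : ℕ,
      (∫ ω, ((∑ i ∈ Finset.range n, X i ω) - ∑ j ∈ Finset.range n, Y j ω) *
        (if (∑ j ∈ Finset.range n, Y j ω) ≤ ∑ i ∈ Finset.range n, X i ω then 1 else 0))
      ≤ n * (μv - μc + Real.exp (-(n * δ ^ 2) / (3 * μv))
                     + Real.exp (-(n * δ ^ 2) / (3 * μc))))
    ∧ (∃ C c : ℝ, 0 < c ∧ ∀ n : ℕ,
        (1 - C * Real.exp (-c * n)) *
          (∫ ω, ((∑ i ∈ Finset.range n, X i ω) - ∑ j ∈ Finset.range n, Y j ω) *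
            (if (∑ j ∈ Finset.range n, Y j ω) ≤ ∑ i ∈ Finset.range n, X i ω then 1 else 0))
        ≤ n * (μv - μc)) := by
  simp only [sub_mul_ite_le_eq_max]
  subst hδ
  have hμv_pos : 0 < μv := hpos.trans hlt
  set c := ((μv - μc) / 2) ^ 2 / (3 * μv)
  have hc_pos : 0 < c := div_pos (pow_pos (by linarith) 2) (by positivity)
  have hc_le : c ≤ (√μv - √μc) ^ 2 :=
    calc c = (μv - μc) ^ 2 / (4 * μv) / 3 := by ring
      _ ≤ (μv - μc) ^ 2 / (4 * μv) := div_le_self (by positivity) (by norm_num)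
      _ ≤ (√μv - √μc) ^ 2 := sq_sub_div_le_sq_sqrt_sub_sqrt hpos.le hlt.le
  have hFB_ge n := by
    simpa using le_integral_max_sum_sub_sum hX hY hXrange hYrange hμv hμc (range n)
  have hFB_le n : ∫ ω, max (∑ i ∈ range n, X i ω - ∑ j ∈ range n, Y j ω) 0
      ≤ n * (μv - μc) + n * exp (-c * n) := by
    grw [integral_max_sum_sub_sum_le hX hY hindep hXrange hYrange hμv hμc hpos hlt.le (range n),
      card_range, ← hc_le, neg_mul, mul_comm c]
  refine ⟨fun n ↦ ?_, ⟨1 / (μv - μc), c, hc_pos, fun n ↦ ?_⟩⟩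
  · rw [show -(n * ((μv - μc) / 2) ^ 2) / (3 * μv) = -c * n by ring]
    linarith [hFB_le n, mul_nonneg n.cast_nonneg (exp_pos (-(n * ((μv - μc) / 2) ^ 2) / (3 * μc))).le]
  · have hCE : 0 ≤ 1 / (μv - μc) * exp (-c * n) :=
      mul_nonneg (one_div_nonneg.2 (sub_pos.2 hlt).le) (exp_pos _).le
    have hcancel : 1 / (μv - μc) * exp (-c * n) * (n * (μv - μc)) = n * exp (-c * n) := by
      field_simp [sub_ne_zero.2 hlt.ne']
    linarith [mul_le_mul_of_nonneg_left (hFB_ge n) hCE, hFB_le n]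

/-- Efficiency of the always-trade mechanism: the first best is at most
`n(μ_v − μ_c + e^{−nδ²/(3μ_v)} + e^{−nδ²/(3μ_c)})`, so the always-trade GFT
`n(μ_v − μ_c)` is at least `(1 − e^{−Ω(n)})·FB`. -/
theorem stmt_8 {Ω : Type*} [MeasureSpace Ω] [IsProbabilityMeasure (ℙ : Measure Ω)]
    (X Y : ℕ → Ω → ℝ) (hX : ∀ i, Measurable (X i)) (hY : ∀ j, Measurable (Y j))
    (hindep : iIndepFun (Sum.elim X Y) ℙ)
    (hXid : ∀ i j, IdentDistrib (X i) (X j) ℙ ℙ)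
    (hYid : ∀ i j, IdentDistrib (Y i) (Y j) ℙ ℙ)
    (hXrange : ∀ i, ∀ᵐ ω ∂ℙ, X i ω ∈ Set.Icc (0:ℝ) 1)
    (hYrange : ∀ j, ∀ᵐ ω ∂ℙ, Y j ω ∈ Set.Icc (0:ℝ) 1)
    (μv μc δ : ℝ) (hμv : ∀ i, (∫ ω, X i ω) = μv) (hμc : ∀ j, (∫ ω, Y j ω) = μc)
    (hlt : μc < μv) (hpos : 0 < μc) (hδ : δ = (μv - μc) / 2) :
    (∀ n : ℕ,
      (∫ ω, ((∑ i ∈ Finset.range n, X i ω) - ∑ j ∈ Finset.range n, Y j ω) *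
        (if (∑ j ∈ Finset.range n, Y j ω) ≤ ∑ i ∈ Finset.range n, X i ω then 1 else 0))
      ≤ n * (μv - μc + Real.exp (-(n * δ ^ 2) / (3 * μv))
                     + Real.exp (-(n * δ ^ 2) / (3 * μc))))
    ∧ (∃ C c : ℝ, 0 < c ∧ ∀ n : ℕ,
        (1 - C * Real.exp (-c * n)) *
          (∫ ω, ((∑ i ∈ Finset.range n, X i ω) - ∑ j ∈ Finset.range n, Y j ω) *
            (if (∑ j ∈ Finset.range n, Y j ω) ≤ ∑ i ∈ Finset.range n, X i ω then 1 else 0))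
        ≤ n * (μv - μc)) :=
  stmt_8_general X Y hX hY hindep hXrange hYrange μv μc δ hμv hμc hlt hpos hδ
end

section
/- Let f₁,...,fₙ : [0,1] → ℝ be non-decreasing differentiable functions, define x(b) = ∑ᵢ fᵢ(bᵢ) and p(b) = ∑ᵢ (bᵢ·fᵢ(bᵢ) − ∫₀^{bᵢ} fᵢ(z)dz). Then for each agent i with value vᵢ ∈ [0,1] and each fixed b₋ᵢ, the utility uᵢ(bᵢ) = vᵢ·x(bᵢ,b₋ᵢ) − p(bᵢ,b₋ᵢ) is maximized at bᵢ = vᵢ. -/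
/-!
The agent's utility is separable across coordinates, so only the own term
`v * f c - (c * f c - ∫₀ᶜ f)` matters. Its gain from reporting `v` instead of `t` is
`∫ₜᵛ f - (v - t) * f t`, which is nonnegative because a monotone `f` lies above `f t` to
the right of `t` and below it to the left.
-/

open Finset

theorem MonotoneOn.sub_mul_le_intervalIntegral {g : ℝ → ℝ} {t v : ℝ}
    (hg : MonotoneOn g (Set.uIcc t v)) : (v - t) * g t ≤ ∫ z in t..v, g z := by
  rcases le_total t v with htv | hvt
  · have hle : ∫ _ in t..v, g t ≤ ∫ z in t..v, g z :=
      intervalIntegral.integral_mono_on htv intervalIntegrable_const hg.intervalIntegrable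
        fun z hz ↦ hg (Set.left_mem_uIcc) (Set.Icc_subset_uIcc hz) hz.1
    simpa [mul_comm] using hle
  · have hle : ∫ z in v..t, g z ≤ ∫ _ in v..t, g t :=
      intervalIntegral.integral_mono_on hvt (Set.uIcc_comm t v ▸ hg).intervalIntegrable
        intervalIntegrable_const
        fun z hz ↦ hg (Set.Icc_subset_uIcc' hz) Set.left_mem_uIcc hz.2
    rw [intervalIntegral.integral_symm]
    simp only [intervalIntegral.integral_const, smul_eq_mul] at hle
    linarith

noncomputable def myersonUtility (g : ℝ → ℝ) (v c : ℝ) : ℝ :=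
  v * g c - (c * g c - ∫ z in (0 : ℝ)..c, g z)

theorem myersonUtility_le_self {g : ℝ → ℝ} {s : Set ℝ} (hs : s.OrdConnected)
    (hg : MonotoneOn g s) (h0 : 0 ∈ s) {v t : ℝ} (hv : v ∈ s) (ht : t ∈ s) :
    myersonUtility g v t ≤ myersonUtility g v v := by
  have hgain : (v - t) * g t ≤ ∫ z in t..v, g z :=
    (hg.mono (hs.uIcc_subset ht hv)).sub_mul_le_intervalIntegral
  have hsplit : (∫ z in (0 : ℝ)..v, g z) - ∫ z in (0 : ℝ)..t, g z = ∫ z in t..v, g z :=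
    intervalIntegral.integral_interval_sub_left
      (hg.mono (hs.uIcc_subset h0 hv)).intervalIntegrable
      (hg.mono (hs.uIcc_subset h0 ht)).intervalIntegrable
  unfold myersonUtility
  linarith

theorem Fintype.sum_apply_update_le {ι α M : Type*} [Fintype ι] [DecidableEq ι]
    [AddCommMonoid M] [PartialOrder M] [IsOrderedAddMonoid M]
    (φ : ι → α → M) (b : ι → α) {i : ι} {t s : α} (h : φ i t ≤ φ i s) :
    ∑ j, φ j (Function.update b i t j) ≤ ∑ j, φ j (Function.update b i s j) := by
  refine Finset.sum_le_sum fun j _ ↦ ?_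
  rcases eq_or_ne j i with rfl | hji
  · simpa using h
  · simp [Function.update_of_ne hji]

theorem stmt_14_general (n : ℕ) (f : Fin n → ℝ → ℝ)
    (hmono : ∀ i, MonotoneOn (f i) (Set.Icc 0 1))
    (x : (Fin n → ℝ) → ℝ) (hx : ∀ b, x b = ∑ i, f i (b i))
    (p : (Fin n → ℝ) → ℝ)
    (hp : ∀ b, p b = ∑ i, (b i * f i (b i) - ∫ z in (0:ℝ)..(b i), f i z)) :
    ∀ (i : Fin n) (v : ℝ), v ∈ Set.Icc (0:ℝ) 1 →
      ∀ (b : Fin n → ℝ) (t : ℝ), t ∈ Set.Icc (0:ℝ) 1 →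
        v * x (Function.update b i t) - p (Function.update b i t)
          ≤ v * x (Function.update b i v) - p (Function.update b i v) := by
  intro i v hv b t ht
  have hsep : ∀ c, v * x (Function.update b i c) - p (Function.update b i c)
      = ∑ j, myersonUtility (f j) v (Function.update b i c j) := by
    intro c
    simp only [hx, hp, myersonUtility, mul_sum, ← sum_sub_distrib]
  rw [hsep, hsep]
  exact Fintype.sum_apply_update_le (fun j ↦ myersonUtility (f j) v) b
    (myersonUtility_le_self Set.ordConnected_Icc (hmono i) ⟨le_rfl, zero_le_one⟩ hv ht)

/-- Separable mechanisms with non-decreasing differentiable components and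
Myerson payments are incentive compatible: truthful reporting maximizes utility. -/
theorem stmt_14 (n : ℕ) (f : Fin n → ℝ → ℝ)
    (hmono : ∀ i, MonotoneOn (f i) (Set.Icc 0 1))
    (hdiff : ∀ i, DifferentiableOn ℝ (f i) (Set.Icc 0 1))
    (x : (Fin n → ℝ) → ℝ) (hx : ∀ b, x b = ∑ i, f i (b i))
    (p : (Fin n → ℝ) → ℝ)
    (hp : ∀ b, p b = ∑ i, (b i * f i (b i) - ∫ z in (0:ℝ)..(b i), f i z)) :
    ∀ (i : Fin n) (v : ℝ), v ∈ Set.Icc (0:ℝ) 1 →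
      ∀ (b : Fin n → ℝ) (t : ℝ), t ∈ Set.Icc (0:ℝ) 1 →
        v * x (Function.update b i t) - p (Function.update b i t)
          ≤ v * x (Function.update b i v) - p (Function.update b i v) :=
  stmt_14_general n f hmono x hx p hp
end

section
/- Let x : [0,1] → [0,1] be non-decreasing, and define the Myerson payment p(b) = b·x(b) − ∫₀ᵇ x(z)dz. Then for every value v ∈ [0,1], the function b ↦ v·x(b) − p(b) attains its maximum over [0,1] at b = v. -/
/-- Single-agent incentive compatibility of the Myerson payment rule:
for a monotone allocation `x : [0,1] → [0,1]` and payment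
`p(b) = b·x(b) − ∫₀ᵇ x`, the utility `v·x(b) − p(b)` is maximized at `b = v`. -/
theorem stmt_19 (x : ℝ → ℝ) (hmono : MonotoneOn x (Set.Icc 0 1))
    (hrange : ∀ z ∈ Set.Icc (0:ℝ) 1, x z ∈ Set.Icc (0:ℝ) 1)
    (p : ℝ → ℝ) (hp : ∀ b, p b = b * x b - ∫ z in (0:ℝ)..b, x z) :
    ∀ v ∈ Set.Icc (0:ℝ) 1, ∀ b ∈ Set.Icc (0:ℝ) 1,
      v * x b - p b ≤ v * x v - p v := by
  intro v hv b hb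
  obtain ⟨hv0, hv1⟩ := hv
  obtain ⟨hb0, hb1⟩ := hb
  have hsub : ∀ c d : ℝ, c ∈ Set.Icc (0:ℝ) 1 → d ∈ Set.Icc (0:ℝ) 1 →
      IntervalIntegrable x MeasureTheory.volume c d := fun c d hc hd =>
    (hmono.mono (Set.uIcc_subset_Icc hc hd)).intervalIntegrable
  have h0 : (0:ℝ) ∈ Set.Icc (0:ℝ) 1 := by norm_num
  have hsplit : (∫ z in (0:ℝ)..v, x z) - ∫ z in (0:ℝ)..b, x z = ∫ z in b..v, x z :=
    intervalIntegral.integral_interval_sub_left (hsub 0 v h0 ⟨hv0, hv1⟩)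
      (hsub 0 b h0 ⟨hb0, hb1⟩)
  have key : (v - b) * x b ≤ ∫ z in b..v, x z := by
    rcases le_total b v with h | h
    · have hle : ∫ z in b..v, (x b) ≤ ∫ z in b..v, x z := by
        apply intervalIntegral.integral_mono_on h intervalIntegrable_const
          (hsub b v ⟨hb0, hb1⟩ ⟨hv0, hv1⟩)
        intro z hz
        exact hmono ⟨hb0, hb1⟩ ⟨le_trans hb0 hz.1, hz.2.trans hv1⟩ hz.1
      simpa [intervalIntegral.integral_const, smul_eq_mul] using hle
    · have hle : ∫ z in v..b, x z ≤ ∫ z in v..b, (x b) := by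
        apply intervalIntegral.integral_mono_on h (hsub v b ⟨hv0, hv1⟩ ⟨hb0, hb1⟩)
          intervalIntegrable_const
        intro z hz
        exact hmono ⟨le_trans hv0 hz.1, hz.2.trans hb1⟩ ⟨hb0, hb1⟩ hz.2
      rw [intervalIntegral.integral_symm v b]
      simp only [intervalIntegral.integral_const, smul_eq_mul] at hle
      nlinarith
  rw [hp, hp]
  nlinarith [hsplit, key]
end
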